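/- Necessity direction of the paper's Proposition 1, step 1: Φxw is invertible (IsUnit Φxw.det); indeed Φxw = (1 − ZA)⁻¹ * (1 + ZB * Φuw), where both 1 − ZA and 1 + ZB * Φuw are invertible because ZA and ZB * Φuw are strictly block lower triangular. -/
import Mathlib


open Matrix

/-- `M` is block lower triangular: the `(t,s)` block vanishes whenever `s > t`. -/
def IsBlockLowerTri {T a b : ℕ} (M : Matrix (Fin T × Fin a) (Fin T × Fin b) ℝ) : Prop :=
  ∀ (t s : Fin T) (i : Fin a) (j : Fin b), t < s → M (t, i) (s, j) = 0

/-- `M` is strictly block lower triangular: the `(t,s)` block vanishes whenever `s ≥ t`. -/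
def IsStrictBlockLowerTri {T a b : ℕ} (M : Matrix (Fin T × Fin a) (Fin T × Fin b) ℝ) : Prop :=
  ∀ (t s : Fin T) (i : Fin a) (j : Fin b), t ≤ s → M (t, i) (s, j) = 0

/-- `M` is block diagonal: the `(t,s)` block vanishes whenever `s ≠ t`. -/
def IsBlockDiag {T a b : ℕ} (M : Matrix (Fin T × Fin a) (Fin T × Fin b) ℝ) : Prop :=
  ∀ (t s : Fin T) (i : Fin a) (j : Fin b), t ≠ s → M (t, i) (s, j) = 0

lemma strict_pow_zero {T a : ℕ} (M : Matrix (Fin T × Fin a) (Fin T × Fin a) ℝ)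
    (hM : IsStrictBlockLowerTri M) (k : ℕ) (t s : Fin T) (i j : Fin a)
    (h : (t : ℕ) < (s : ℕ) + k) : (M ^ k) (t, i) (s, j) = 0 := by
  induction k generalizing s j with
  | zero =>
    simp only [pow_zero, Matrix.one_apply]
    rw [if_neg]
    · rintro ⟨rfl, rfl⟩; omega
  | succ k ih =>
    rw [pow_succ, Matrix.mul_apply]
    apply Finset.sum_eq_zero
    rintro ⟨u, m⟩ _
    by_cases hu : (t : ℕ) < (u : ℕ) + k
    · rw [ih u m hu, zero_mul]
    · rw [hM u s m j (by omega), mul_zero]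

lemma strict_nilpotent {T a : ℕ} (M : Matrix (Fin T × Fin a) (Fin T × Fin a) ℝ)
    (hM : IsStrictBlockLowerTri M) : IsNilpotent M := by
  refine ⟨T, ?_⟩
  ext ⟨t, i⟩ ⟨s, j⟩
  rw [strict_pow_zero M hM T t s i j (by omega)]
  rfl

lemma strict_mul_lower {T a b c : ℕ} (A : Matrix (Fin T × Fin a) (Fin T × Fin b) ℝ)
    (B : Matrix (Fin T × Fin b) (Fin T × Fin c) ℝ)
    (hA : IsStrictBlockLowerTri A) (hB : IsBlockLowerTri B) :
    IsStrictBlockLowerTri (A * B) := by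
  intro t s i j hts
  rw [Matrix.mul_apply]
  apply Finset.sum_eq_zero
  rintro ⟨u, m⟩ _
  by_cases hu : t ≤ u
  · rw [hA t u i m hu, zero_mul]
  · rw [hB u s m j (lt_of_lt_of_le (lt_of_not_ge hu) hts), mul_zero]

theorem stmt_8 (T dx du dy : ℕ) (hT : 1 ≤ T)
    (ZA : Matrix (Fin T × Fin dx) (Fin T × Fin dx) ℝ)
    (ZB : Matrix (Fin T × Fin dx) (Fin T × Fin du) ℝ)
    (𝒞 : Matrix (Fin T × Fin dy) (Fin T × Fin dx) ℝ)
    (hZA : IsStrictBlockLowerTri ZA) (hZB : IsStrictBlockLowerTri ZB)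
    (hC : IsBlockDiag 𝒞)
    (Φxw : Matrix (Fin T × Fin dx) (Fin T × Fin dx) ℝ)
    (Φxe : Matrix (Fin T × Fin dx) (Fin T × Fin dy) ℝ)
    (Φuw : Matrix (Fin T × Fin du) (Fin T × Fin dx) ℝ)
    (Φue : Matrix (Fin T × Fin du) (Fin T × Fin dy) ℝ)
    (hΦxw : IsBlockLowerTri Φxw) (hΦxe : IsBlockLowerTri Φxe)
    (hΦuw : IsBlockLowerTri Φuw) (hΦue : IsBlockLowerTri Φue)
    (haff1 : (1 - ZA) * Φxw - ZB * Φuw = 1)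
    (haff2 : (1 - ZA) * Φxe - ZB * Φue = 0)
    (haff3 : Φxw * (1 - ZA) - Φxe * 𝒞 = 1)
    (haff4 : Φuw * (1 - ZA) - Φue * 𝒞 = 0) :
    IsUnit Φxw.det ∧ Φxw = (1 - ZA)⁻¹ * (1 + ZB * Φuw) ∧
      IsUnit (1 - ZA).det ∧ IsUnit (1 + ZB * Φuw).det := by
  have hA : IsUnit (1 - ZA) := (strict_nilpotent ZA hZA).isUnit_one_sub
  have hBn : IsNilpotent (ZB * Φuw) := strict_nilpotent _ (strict_mul_lower ZB Φuw hZB hΦuw)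
  have hB : IsUnit (1 + ZB * Φuw) := by
    have := hBn.neg.isUnit_one_sub
    rwa [sub_neg_eq_add] at this
  have hAd : IsUnit (1 - ZA).det := (Matrix.isUnit_iff_isUnit_det _).mp hA
  have hBd : IsUnit (1 + ZB * Φuw).det := (Matrix.isUnit_iff_isUnit_det _).mp hB
  have heq : (1 - ZA) * Φxw = 1 + ZB * Φuw := sub_eq_iff_eq_add.mp haff1
  have hΦ : Φxw = (1 - ZA)⁻¹ * (1 + ZB * Φuw) := by
    rw [← heq, ← Matrix.mul_assoc, Matrix.nonsing_inv_mul _ hAd, Matrix.one_mul]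
  refine ⟨?_, hΦ, hAd, hBd⟩
  have : (1 - ZA).det * Φxw.det = (1 + ZB * Φuw).det := by
    rw [← Matrix.det_mul, heq]
  exact isUnit_of_mul_isUnit_right (this ▸ hBd)
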